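/- Let c₀, c₁, c₂ be real numbers and m₀, m₁, m₂ > 0 with Σⱼ₌₀² cⱼ mⱼ² = 0, and let A ≥ 0. Then the function s ↦ Σⱼ₌₀² cⱼ mⱼ² e^{−s(mⱼ²+A)} (1/(2s) − (mⱼ²+A)) is Lebesgue integrable on (0,∞) and ∫₀^∞ Σⱼ₌₀² cⱼ mⱼ² e^{−s(mⱼ²+A)} (1/(2s) − (mⱼ²+A)) ds = −(1/2) Σⱼ₌₀² cⱼ mⱼ² log(mⱼ² + A). -/

import Mathlib

/-!
With `wⱼ = cⱼ mⱼ²` and `bⱼ = mⱼ² + A`, the integrand is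
`½ ∑ wⱼ s⁻¹ e^{-bⱼ s} - ∑ wⱼ bⱼ e^{-bⱼ s}`. Each `bⱼ e^{-bⱼ s}` integrates to `1`, so the second sum
contributes `-∑ wⱼ = 0`. In the first sum, `∑ wⱼ = 0` allows subtracting `e^{-s}` inside every term,
which turns it into a combination of Frullani integrals `∫₀^∞ s⁻¹ (e^{-s} - e^{-bs}) ds = log b`.
-/

open MeasureTheory Set Real Filter Topology

lemma integrableOn_inv_mul_exp_neg_mul_sub {a b : ℝ} (ha : 0 < a) (hb : 0 < b) :
    IntegrableOn (fun s => s⁻¹ * (exp (-(a * s)) - exp (-(b * s)))) (Ioi 0) := by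
  wlog hab : a ≤ b generalizing a b
  · convert (this hb ha (le_of_not_ge hab)).neg using 1
    funext s
    simp only [Pi.neg_apply]
    ring
  -- On `(0, ∞)` the integrand lies between `0` and `(b - a) e^{-as}`, by `1 - e^{-x} ≤ x`.
  refine Integrable.mono' ((exp_neg_integrableOn_Ioi 0 ha).const_mul (b - a))
    (by fun_prop) ?_
  filter_upwards [ae_restrict_mem measurableSet_Ioi] with s (hs : 0 < s)
  have hsplit : exp (-(b * s)) = exp (-(a * s)) * exp (-((b - a) * s)) := by
    rw [← exp_add]; ring_nf
  have hdecay : exp (-((b - a) * s)) ≤ 1 := exp_le_one_iff.2 (by nlinarith)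
  have hlin : 1 - exp (-((b - a) * s)) ≤ (b - a) * s := by
    linarith [add_one_le_exp (-((b - a) * s))]
  have hexp := exp_pos (-(a * s))
  rw [norm_of_nonneg (mul_nonneg (inv_nonneg.2 hs.le) (by rw [hsplit]; nlinarith)), hsplit,
    neg_mul, inv_mul_le_iff₀ hs]
  nlinarith

lemma integral_inv_mul_exp_neg_mul_sub {a b : ℝ} (ha : 0 < a) (hb : 0 < b) :
    ∫ s in Ioi 0, s⁻¹ * (exp (-(a * s)) - exp (-(b * s))) = log (b / a) := by
  have hf : LocallyIntegrableOn (fun x => exp (-x)) (Ioi 0) :=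
    (continuous_exp.comp continuous_neg).locallyIntegrable.locallyIntegrableOn _
  have h0 : Tendsto (fun x => exp (-x)) (𝓝[>] 0) (𝓝 1) := by
    simpa using (continuous_neg.rexp.tendsto 0).mono_left nhdsWithin_le_nhds
  simpa using Frullani.integral_Ioi_eq hf ha hb h0 tendsto_exp_neg_atTop_nhds_zero
    (integrableOn_inv_mul_exp_neg_mul_sub ha hb)

lemma integral_mul_exp_neg_mul_Ioi {b : ℝ} (hb : 0 < b) :
    ∫ s in Ioi 0, b * exp (-(b * s)) = 1 := by
  simp_rw [integral_const_mul, ← neg_mul, integral_exp_mul_Ioi (neg_neg_of_pos hb)]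
  field_simp
  simp

section WeightedSum

variable {ι : Type*} [Fintype ι] {w b : ι → ℝ}

lemma sum_inv_mul_exp_neg_mul_eq (hw : ∑ i, w i = 0) (s : ℝ) :
    ∑ i, w i * (s⁻¹ * exp (-(b i * s))) =
      -∑ i, w i * (s⁻¹ * (exp (-(1 * s)) - exp (-(b i * s)))) := by
  simp only [mul_sub, Finset.sum_sub_distrib, ← Finset.sum_mul, hw]
  ring

lemma integrableOn_sum_inv_mul_exp_neg_mul (hw : ∑ i, w i = 0) (hb : ∀ i, 0 < b i) :
    IntegrableOn (fun s => ∑ i, w i * (s⁻¹ * exp (-(b i * s)))) (Ioi 0) := by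
  simp_rw [sum_inv_mul_exp_neg_mul_eq hw]
  exact (integrable_finsetSum _ fun i _ =>
    (integrableOn_inv_mul_exp_neg_mul_sub one_pos (hb i)).const_mul (w i)).neg

lemma integral_sum_inv_mul_exp_neg_mul (hw : ∑ i, w i = 0) (hb : ∀ i, 0 < b i) :
    ∫ s in Ioi 0, ∑ i, w i * (s⁻¹ * exp (-(b i * s))) = -∑ i, w i * log (b i) := by
  simp_rw [sum_inv_mul_exp_neg_mul_eq hw]
  rw [integral_neg, integral_finsetSum _ fun i _ =>
    (integrableOn_inv_mul_exp_neg_mul_sub one_pos (hb i)).const_mul (w i)]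
  simp_rw [integral_const_mul, integral_inv_mul_exp_neg_mul_sub one_pos (hb _), div_one]

end WeightedSum

/-- Building block of `Γ⁰₂(k)`: if `Σⱼ cⱼ mⱼ² = 0`, `mⱼ > 0` and `A ≥ 0`, then
`s ↦ Σⱼ cⱼ mⱼ² e^{−s(mⱼ²+A)}(1/(2s) − (mⱼ²+A))` is integrable on `(0,∞)` with integral
`−(1/2) Σⱼ cⱼ mⱼ² log(mⱼ² + A)`. -/
theorem stmt19 (c m : Fin 3 → ℝ) (hm : ∀ j, 0 < m j)
    (hc : ∑ j, c j * m j ^ 2 = 0) (A : ℝ) (hA : 0 ≤ A) :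
    IntegrableOn
      (fun s : ℝ => ∑ j, c j * m j ^ 2 * Real.exp (-s * (m j ^ 2 + A)) *
        (1 / (2 * s) - (m j ^ 2 + A))) (Set.Ioi 0) ∧
    (∫ s in Set.Ioi (0 : ℝ), ∑ j, c j * m j ^ 2 * Real.exp (-s * (m j ^ 2 + A)) *
        (1 / (2 * s) - (m j ^ 2 + A))) =
      -(1 / 2) * ∑ j, c j * m j ^ 2 * Real.log (m j ^ 2 + A) := by
  set w : Fin 3 → ℝ := fun j => c j * m j ^ 2
  set b : Fin 3 → ℝ := fun j => m j ^ 2 + A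
  have hb : ∀ j, 0 < b j := fun j => by have := hm j; positivity
  have hsplit : (fun s : ℝ => ∑ j, c j * m j ^ 2 * Real.exp (-s * (m j ^ 2 + A)) *
      (1 / (2 * s) - (m j ^ 2 + A))) = fun s =>
      2⁻¹ * ∑ j, w j * (s⁻¹ * exp (-(b j * s))) - ∑ j, w j * (b j * exp (-(b j * s))) := by
    funext s
    simp only [Finset.mul_sum, ← Finset.sum_sub_distrib, w, b]
    congr 1 with j
    rw [one_div, mul_inv, neg_mul, mul_comm s]
    ring
  have hint := integrableOn_sum_inv_mul_exp_neg_mul hc hb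
  have hexp (j : Fin 3) : IntegrableOn (fun s => w j * (b j * exp (-(b j * s)))) (Ioi 0) :=
by
    have := exp_neg_integrableOn_Ioi 0 (hb j)
    simp only [neg_mul] at this
    exact (this.const_mul _).const_mul _
  have hexp_sum := integrable_finsetSum Finset.univ fun j _ => hexp j
  rw [hsplit]
  refine ⟨(hint.const_mul _).sub hexp_sum, ?_⟩
  rw [integral_sub (hint.const_mul _) hexp_sum, integral_const_mul,
    integral_sum_inv_mul_exp_neg_mul hc hb, integral_finsetSum _ fun j _ => hexp j]
  simp only [integral_const_mul, integral_mul_exp_neg_mul_Ioi (hb _), mul_one]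
  rw [show ∑ j, w j = 0 from hc]
  ring
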